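/- arXiv:2306.16669 — 3 statements merged into one kernel-verified Lean document; each statement's English description precedes it below -/
import Mathlib

section
/- Every feasible schedule of an instance of P2,S1|s_j,t_j|C_max with n ≥ 1 jobs satisfies 2·C_max ≥ (min_{j} s_j) + Σ_{j=1}^n A_j + (min_{j} t_j); that is, LB_1 = (min_j s_j + Σ_j A_j + min_j t_j)/2 is a valid lower bound on the optimal makespan. -/
open Finset

/-- An instance of the problem `P2,S1|s_j,t_j|C_max`: `n` jobs, each with positive
loading time `s j`, processing time `p j`, and unloading time `t j`. -/
structure PInstance (n : ℕ) where
  s : Fin n → ℝ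
  p : Fin n → ℝ
  t : Fin n → ℝ
  s_pos : ∀ j, 0 < s j
  p_pos : ∀ j, 0 < p j
  t_pos : ∀ j, 0 < t j

namespace PInstance

variable {n : ℕ}

/-- The length `A j = s j + p j + t j` of job `j`. -/
def A (I : PInstance n) (j : Fin n) : ℝ := I.s j + I.p j + I.t j

/-- Feasibility of the schedule assigning start time `σ j` and machine `μ j` to job `j`:
start times are nonnegative, machines are in `{1, 2}`, distinct jobs on the same machine
occupy disjoint half-open intervals `[σ j, σ j + A j)`, and the `2n` server intervals
(the loading intervals `[σ j, σ j + s j)` and the unloading intervals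
`[σ j + s j + p j, σ j + A j)`) are pairwise disjoint. -/
def Feasible (I : PInstance n) (σ : Fin n → ℝ) (μ : Fin n → ℕ) : Prop :=
  (∀ j, 0 ≤ σ j) ∧
  (∀ j, μ j = 1 ∨ μ j = 2) ∧
  (∀ i j, i ≠ j → μ i = μ j → σ i + I.A i ≤ σ j ∨ σ j + I.A j ≤ σ i) ∧
  (∀ i j, i ≠ j → σ i + I.s i ≤ σ j ∨ σ j + I.s j ≤ σ i) ∧
  (∀ i j, i ≠ j →
    σ i + I.A i ≤ σ j + I.s j + I.p j ∨ σ j + I.A j ≤ σ i + I.s i + I.p i) ∧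
  (∀ i j, σ i + I.s i ≤ σ j + I.s j + I.p j ∨ σ j + I.A j ≤ σ i)

/-- `C` is the makespan of the schedule with start times `σ`:
`C = max_{j=1,…,n} (σ j + A j)`. -/
def IsMakespan (I : PInstance n) (σ : Fin n → ℝ) (C : ℝ) : Prop :=
  (∀ j, σ j + I.A j ≤ C) ∧ ∃ j, σ j + I.A j = C

end PInstance

/-!
Let `j₀` be the job loaded first and `k` a job finishing at `C_max`. Every other job starts
after the loading of `j₀`, hence at time `≥ min s`, and every other job ends before the
unloading of `k` begins, hence by `C_max - min t`. So the machine not running `j₀` is busy only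
from `min s` on, and the machine not running `k` only until `C_max - min t`; as the jobs on one
machine are disjoint intervals, the two machines together hold at most
`2 C_max - min s - min t` of total length.
-/

open MeasureTheory

theorem sum_le_of_pairwise_disjoint_Ico {ι : Type*} (F : Finset ι) (a len : ι → ℝ)
    {L U : ℝ} (hlen : ∀ i ∈ F, 0 ≤ len i)
    (hdisj : ∀ i ∈ F, ∀ j ∈ F, i ≠ j → a i + len i ≤ a j ∨ a j + len j ≤ a i)
    (hL : ∀ i ∈ F, L ≤ a i) (hU : ∀ i ∈ F, a i + len i ≤ U) (hLU : L ≤ U) :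
    ∑ i ∈ F, len i ≤ U - L := by
  have hIco : (F : Set ι).PairwiseDisjoint fun i ↦ Set.Ico (a i) (a i + len i) := by
    intro i hi j hj hij
    refine Set.Ico_disjoint_Ico.2 ?_
    rcases hdisj i hi j hj hij with h | h
    · exact min_le_left _ _ |>.trans (h.trans (le_max_right _ _))
    · exact min_le_right _ _ |>.trans (h.trans (le_max_left _ _))
  have hsub : (⋃ i ∈ F, Set.Ico (a i) (a i + len i)) ⊆ Set.Icc L U :=
    Set.iUnion₂_subset fun i hi ↦
      Set.Ico_subset_Icc_self.trans (Set.Icc_subset_Icc (hL i hi) (hU i hi))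
  have hvol := measure_mono (μ := volume) hsub
  rw [measure_biUnion_finset hIco fun _ _ ↦ measurableSet_Ico, Real.volume_Icc] at hvol
  simp only [Real.volume_Ico, add_sub_cancel_left] at hvol
  rwa [← ENNReal.ofReal_sum_of_nonneg hlen, ENNReal.ofReal_le_ofReal_iff (sub_nonneg.2 hLU)]
    at hvol

namespace PInstance

variable {n : ℕ} {I : PInstance n} {σ : Fin n → ℝ} {μ : Fin n → ℕ}

theorem A_pos (I : PInstance n) (j : Fin n) : 0 < I.A j := by
  have := I.s_pos j; have := I.p_pos j; have := I.t_pos j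
  unfold A; linarith

theorem Feasible.exists_first_loaded [Nonempty (Fin n)] (hfeas : I.Feasible σ μ) :
    ∃ j₀, ∀ i, i ≠ j₀ → σ j₀ + I.s j₀ ≤ σ i := by
  obtain ⟨j₀, -, hmin⟩ := Finset.univ.exists_min_image σ Finset.univ_nonempty
  refine ⟨j₀, fun i hi ↦ (hfeas.2.2.2.1 j₀ i hi.symm).resolve_right fun h ↦ ?_⟩
  linarith [hmin i (Finset.mem_univ i), I.s_pos i]

/-- The unloading of `k` occupies the server during `[C - t k, C)`, and that of `j` cannot
follow it since `j` also ends by `C`. -/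
theorem Feasible.add_A_le_of_ne_last {C : ℝ} (hfeas : I.Feasible σ μ)
    (hC : I.IsMakespan σ C) {k : Fin n} (hk : σ k + I.A k = C) (j : Fin n) (hj : j ≠ k) :
    σ j + I.A j ≤ C - I.t k := by
  have hend := hC.1 j
  have := I.t_pos j
  rcases hfeas.2.2.2.2.1 j k hj with h | h <;> simp only [A] at * <;> linarith

theorem IsMakespan.s_add_t_le {C : ℝ} (hfeas : I.Feasible σ μ) (hC : I.IsMakespan σ C)
    (j : Fin n) : I.s j + I.t j ≤ C := by
  have := hC.1 j; have := hfeas.1 j; have := I.p_pos j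
  simp only [A] at *; linarith

theorem Feasible.sum_A_on_machine_le (hfeas : I.Feasible σ μ) (m : ℕ) {L U : ℝ}
    (hL : ∀ j, μ j = m → L ≤ σ j) (hU : ∀ j, μ j = m → σ j + I.A j ≤ U) (hLU : L ≤ U) :
    ∑ j with μ j = m, I.A j ≤ U - L := by
  refine sum_le_of_pairwise_disjoint_Ico _ σ I.A (fun j _ ↦ (I.A_pos j).le) ?_
    (by simpa using hL) (by simpa using hU) hLU
  simp only [Finset.mem_filter, Finset.mem_univ, true_and]
  exact fun i hi j hj hij ↦ hfeas.2.2.1 i j hij (hi.trans hj.symm)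

end PInstance

/-- Every feasible schedule of an instance with `n ≥ 1` jobs satisfies
`2·C_max ≥ (min_j s j) + Σ_j A j + (min_j t j)`; i.e.,
`LB₁ = (min_j s j + Σ_j A j + min_j t j)/2` is a valid lower bound. -/
theorem lower_bound_LB1 {n : ℕ} (hn : 0 < n) (I : PInstance n)
    (σ : Fin n → ℝ) (μ : Fin n → ℕ)
    (hfeas : I.Feasible σ μ) (Cmax : ℝ) (hC : I.IsMakespan σ Cmax) :
    Finset.univ.inf' ⟨⟨0, hn⟩, Finset.mem_univ _⟩ I.s + (∑ j, I.A j) +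
      Finset.univ.inf' ⟨⟨0, hn⟩, Finset.mem_univ _⟩ I.t ≤ 2 * Cmax := by
  classical
  have : Nonempty (Fin n) := ⟨⟨0, hn⟩⟩
  obtain ⟨j₀, hj₀⟩ := hfeas.exists_first_loaded
  obtain ⟨k, hk⟩ := hC.2
  set smin := Finset.univ.inf' ⟨⟨0, hn⟩, Finset.mem_univ _⟩ I.s
  set tmin := Finset.univ.inf' ⟨⟨0, hn⟩, Finset.mem_univ _⟩ I.t
  have hsmin (j) : smin ≤ I.s j := Finset.inf'_le _ (Finset.mem_univ j)
  have htmin (j) : tmin ≤ I.t j := Finset.inf'_le _ (Finset.mem_univ j)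
  have hmachine (m : ℕ) : ∑ j with μ j = m, I.A j ≤
      (if μ k = m then Cmax else Cmax - tmin) - (if μ j₀ = m then 0 else smin) := by
    refine hfeas.sum_A_on_machine_le m (fun j hj ↦ ?_) (fun j hj ↦ ?_) ?_
    · split_ifs with h
      · exact hfeas.1 j
      · linarith [hj₀ j (by rintro rfl; exact h hj), hfeas.1 j₀, hsmin j₀]
    · split_ifs with h
      · exact hC.1 j
      · linarith [hfeas.add_A_le_of_ne_last hC hk j (by rintro rfl; exact h hj), htmin k]
    · have := hC.s_add_t_le hfeas k
      split_ifs <;> linarith [hsmin k, htmin k, I.s_pos k, I.t_pos k]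
  rw [← Finset.sum_fiberwise_of_maps_to (t := {1, 2}) fun j _ ↦ by simpa using hfeas.2.1 j,
    Finset.sum_pair (by decide)]
  have h₁ := hmachine 1
  have h₂ := hmachine 2
  rcases hfeas.2.1 k with hk₁ | hk₁ <;> rcases hfeas.2.1 j₀ with h₀ | h₀ <;>
    simp only [hk₁, h₀] at h₁ h₂ <;> norm_num at h₁ h₂ <;> linarith
end

section
/- Suppose an instance of P2,S1|s_j,t_j|C_max has an even number n = 2m of jobs (m ≥ 1) and satisfies s_i = p_j and p_i = t_j for all pairs of jobs i, j (equivalently, there is a common c > 0 with s_j = p_j = t_j = c for every job j). Then the schedule that sets σ_{2k−1} = 4c(k−1) and σ_{2k} = 4c(k−1) + c for k = 1,…,m, assigning odd-indexed jobs to machine 1 and even-indexed jobs to machine 2, is feasible and has makespan 2nc = Σ_{j=1}^n (s_j + t_j); in this schedule the server is never idle between time 0 and the makespan. -/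
open Finset

/-- The alternating schedule for an instance with `s_j = p_j = t_j = c`: with jobs indexed
`0, …, 2m−1`, job `2(k−1)` (the (2k−1)-st job) starts at `4c(k−1)` and job `2(k−1)+1`
(the 2k-th job) starts at `4c(k−1) + c`. -/
noncomputable def altStart (c : ℝ) {n : ℕ} (j : Fin n) : ℝ :=
  4 * c * (((j : ℕ) / 2 : ℕ) : ℝ) + (if (j : ℕ) % 2 = 0 then 0 else c)

/-- The alternating machine assignment: odd-indexed jobs (indices `0, 2, 4, …`, i.e. jobs
`1, 3, 5, …`) to machine 1, even-indexed jobs to machine 2. -/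
def altMachine {n : ℕ} (j : Fin n) : ℕ :=
  if (j : ℕ) % 2 = 0 then 1 else 2

/-!
Measure time in units of `c`. The job with index `2q + r` (`r < 2`) loads in slot `4q + r`,
is processed in slot `4q + r + 1` and unloads in slot `4q + r + 2`. Loading slots are thus
`≡ 0, 1 (mod 4)` and unloading slots `≡ 2, 3 (mod 4)`, so the `4m` server slots are distinct and
tile `[0, 4mc)`, while two jobs on the same machine start at least `4` slots apart and each job
holds its machine for `3` slots.
-/

def altSlot (a : ℕ) : ℕ := 4 * (a / 2) + a % 2

theorem altSlot_strictMono : StrictMono altSlot := by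
  intro a b h
  unfold altSlot
  omega

theorem altSlot_ne_add_two (a b : ℕ) : altSlot a ≠ altSlot b + 2 := by
  unfold altSlot
  omega

theorem altSlot_sep_of_mod_two_eq {a b : ℕ} (h : a ≠ b) (hab : a % 2 = b % 2) :
    altSlot a + 3 ≤ altSlot b ∨ altSlot b + 3 ≤ altSlot a := by
  unfold altSlot
  omega

theorem altSlot_add_three_le {a m : ℕ} (h : a < 2 * m) : altSlot a + 3 ≤ 4 * m := by
  unfold altSlot
  omega

theorem altSlot_last_add_three {m : ℕ} (hm : 1 ≤ m) : altSlot (2 * m - 1) + 3 = 4 * m := by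
  unfold altSlot
  omega

theorem exists_altSlot_eq {k m : ℕ} (hk : k < 4 * m) :
    ∃ a < 2 * m, altSlot a = k ∨ altSlot a + 2 = k :=
  ⟨2 * (k / 4) + k % 4 % 2, by omega, by unfold altSlot; omega⟩

theorem altStart_eq {n : ℕ} (c : ℝ) (j : Fin n) : altStart c j = c * altSlot j := by
  unfold altStart altSlot
  rcases Nat.mod_two_eq_zero_or_one (j : ℕ) with h | h <;> simp [h] <;> ring

theorem altMachine_eq_one_or_two {n : ℕ} (j : Fin n) : altMachine j = 1 ∨ altMachine j = 2 := by
  unfold altMachine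
  split <;> simp

theorem mod_two_eq_of_altMachine_eq {n : ℕ} {i j : Fin n} (h : altMachine i = altMachine j) :
    (i : ℕ) % 2 = (j : ℕ) % 2 := by
  unfold altMachine at h
  rcases Nat.mod_two_eq_zero_or_one (i : ℕ) with hi | hi <;>
    rcases Nat.mod_two_eq_zero_or_one (j : ℕ) with hj | hj <;> simp_all

theorem mul_natCast_add_le {c : ℝ} (hc : 0 ≤ c) {a b d : ℕ} (h : a + d ≤ b) :
    c * a + c * d ≤ c * b := by
  rw [← mul_add]
  exact mul_le_mul_of_nonneg_left (by exact_mod_cast h) hc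

theorem unit_slots_disjoint {c : ℝ} (hc : 0 ≤ c) {a b : ℕ} (h : a ≠ b) :
    c * a + c ≤ c * b ∨ c * b + c ≤ c * a := by
  rcases Nat.lt_or_gt_of_ne h with h | h
  · left; simpa using mul_natCast_add_le hc (d := 1) h
  · right; simpa using mul_natCast_add_le hc (d := 1) h

theorem exists_nat_mul_le_lt {c x : ℝ} (hc : 0 < c) (hx : 0 ≤ x) :
    ∃ k : ℕ, c * k ≤ x ∧ x < c * k + c := by
  refine ⟨⌊x / c⌋₊, ?_, ?_⟩
  · have := Nat.floor_le (div_nonneg hx hc.le)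
    rw [le_div_iff₀ hc] at this
    linarith
  · have := Nat.lt_floor_add_one (x / c)
    rw [div_lt_iff₀ hc] at this
    linarith

namespace PInstance

variable {n : ℕ} {I : PInstance n} {c : ℝ}

def IsUniform (I : PInstance n) (c : ℝ) : Prop :=
  ∀ j, I.s j = c ∧ I.p j = c ∧ I.t j = c

theorem isUniform_of_forall_eq (hsp : ∀ i j, I.s i = I.p j) (hpt : ∀ i j, I.p i = I.t j)
    (hc : ∀ j, I.s j = c) : I.IsUniform c := fun j =>
  have hp : I.p j = c := (hsp j j).symm.trans (hc j)
  ⟨hc j, hp, (hpt j j).symm.trans hp⟩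

theorem IsUniform.A_eq (hu : I.IsUniform c) (j : Fin n) : I.A j = 3 * c := by
  obtain ⟨hs, hp, ht⟩ := hu j
  rw [A, hs, hp, ht]
  ring

theorem IsUniform.sum_s_add_t (hu : I.IsUniform c) :
    ∑ j, (I.s j + I.t j) = 2 * (n : ℝ) * c := by
  simp only [fun j => (hu j).1, fun j => (hu j).2.2, sum_const, card_univ, Fintype.card_fin,
    nsmul_eq_mul]
  ring

theorem IsUniform.feasible_of_slots (hu : I.IsUniform c) (hc : 0 ≤ c) {f : Fin n → ℕ}
    {μ : Fin n → ℕ} (hμ : ∀ j, μ j = 1 ∨ μ j = 2) (hf : Function.Injective f)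
    (hgap : ∀ i j, f i ≠ f j + 2)
    (hmach : ∀ i j, i ≠ j → μ i = μ j → f i + 3 ≤ f j ∨ f j + 3 ≤ f i) :
    I.Feasible (fun j => c * f j) μ := by
  have hs j : I.s j = c := (hu j).1
  have hp j : I.p j = c := (hu j).2.1
  have hA := hu.A_eq
  refine ⟨fun j => by positivity, hμ, fun i j hij hμij => ?_, fun i j hij => ?_,
    fun i j hij => ?_, fun i j => ?_⟩
  · simp only [hA]
    rcases hmach i j hij hμij with h | h
    · left; have := mul_natCast_add_le hc h; push_cast at this; linarith
    · right; have := mul_natCast_add_le hc h; push_cast at this; linarith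
  · simpa only [hs] using unit_slots_disjoint hc (hf.ne hij)
  · simp only [hA, hs, hp]
    rcases unit_slots_disjoint hc (hf.ne hij) with h | h
    · left; linarith
    · right; linarith
  · simp only [hA, hs, hp]
    rcases unit_slots_disjoint hc (hgap i j) with h | h
    · left; push_cast at h; linarith
    · right; push_cast at h; linarith

theorem IsUniform.isMakespan_of_slots (hu : I.IsUniform c) (hc : 0 ≤ c) {f : Fin n → ℕ}
    {N : ℕ} (hle : ∀ j, f j + 3 ≤ N) (hlast : ∃ j, f j + 3 = N) :
    I.IsMakespan (fun j => c * f j) (N * c) := by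
  refine ⟨fun j => ?_, ?_⟩
  · have := mul_natCast_add_le hc (hle j)
    push_cast at this
    rw [hu.A_eq]
    linarith
  · obtain ⟨j, hj⟩ := hlast
    refine ⟨j, ?_⟩
    rw [hu.A_eq, ← hj]
    push_cast
    ring

theorem IsUniform.exists_server_busy_of_slots (hu : I.IsUniform c) (hc : 0 < c)
    {f : Fin n → ℕ} {N : ℕ} (hcover : ∀ k < N, ∃ j, f j = k ∨ f j + 2 = k)
    {x : ℝ} (hx₀ : 0 ≤ x) (hx : x < N * c) :
    ∃ j, (c * f j ≤ x ∧ x < c * f j + I.s j) ∨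
      (c * f j + I.s j + I.p j ≤ x ∧ x < c * f j + I.A j) := by
  obtain ⟨k, hk_le, hlt_k⟩ := exists_nat_mul_le_lt hc hx₀
  have hkN : k < N := by
    have : c * k < c * N := by linarith
    exact_mod_cast lt_of_mul_lt_mul_left this hc.le
  obtain ⟨j, rfl | rfl⟩ := hcover k hkN
  · exact ⟨j, Or.inl ⟨hk_le, by rwa [(hu j).1]⟩⟩
  · refine ⟨j, Or.inr ?_⟩
    rw [(hu j).1, (hu j).2.1, hu.A_eq]
    push_cast at hk_le hlt_k
    constructor <;> linarith

end PInstance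

/-- If `n = 2m` (`m ≥ 1`) and `s i = p j`, `p i = t j` for all pairs
(equivalently there is a common `c > 0` with `s j = p j = t j = c`), then the alternating
schedule is feasible, has makespan `2nc = Σ_j (s j + t j)`, and the server is never idle
between time `0` and the makespan. -/
theorem alternating_schedule_feasible {m : ℕ} (hm : 1 ≤ m) (I : PInstance (2 * m))
    (hsp : ∀ i j, I.s i = I.p j) (hpt : ∀ i j, I.p i = I.t j)
    (c : ℝ) (hc : ∀ j, I.s j = c) :
    I.Feasible (altStart c) altMachine ∧
      I.IsMakespan (altStart c) (2 * ((2 * m : ℕ) : ℝ) * c) ∧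
      2 * ((2 * m : ℕ) : ℝ) * c = ∑ j, (I.s j + I.t j) ∧
      (∀ x : ℝ, 0 ≤ x → x < 2 * ((2 * m : ℕ) : ℝ) * c →
        ∃ j, (altStart c j ≤ x ∧ x < altStart c j + I.s j) ∨
          (altStart c j + I.s j + I.p j ≤ x ∧ x < altStart c j + I.A j)) := by
  have hu := PInstance.isUniform_of_forall_eq hsp hpt hc
  have hc₀ : 0 < c := hc ⟨0, by omega⟩ ▸ I.s_pos ⟨0, by omega⟩
  have hσ : altStart c = fun j : Fin (2 * m) => c * altSlot j := funext (altStart_eq c)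
  have h4m : 2 * ((2 * m : ℕ) : ℝ) * c = ((4 * m : ℕ) : ℝ) * c := by push_cast; ring
  rw [hσ, h4m, hu.sum_s_add_t]
  refine ⟨hu.feasible_of_slots hc₀.le altMachine_eq_one_or_two ?_
      (fun i j => altSlot_ne_add_two i j) ?_,
    hu.isMakespan_of_slots hc₀.le (fun j => altSlot_add_three_le j.isLt)
      ⟨⟨2 * m - 1, by omega⟩, altSlot_last_add_three hm⟩,
    by push_cast; ring,
    fun x hx₀ hx => hu.exists_server_busy_of_slots hc₀ (fun k hk => ?_) hx₀ hx⟩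
  · exact altSlot_strictMono.injective.comp Fin.val_injective
  · exact fun i j hij hμ =>
      altSlot_sep_of_mod_two_eq (Fin.val_ne_of_ne hij) (mod_two_eq_of_altMachine_eq hμ)
  · obtain ⟨a, ha, h⟩ := exists_altSlot_eq hk
    exact ⟨⟨a, ha⟩, h⟩
end

section
/- Suppose an instance of P2,S1|s_j,t_j|C_max has an even number n = 2m of jobs (m ≥ 1) and satisfies s_i = p_j and p_i = t_j for all pairs of jobs i, j (equivalently, there is a common c > 0 with s_j = p_j = t_j = c for every job j). Then the minimum makespan over all feasible schedules equals Σ_{j=1}^n (s_j + t_j) = 2nc; in particular the lower bound Σ_j (A_j − p_j) is tight for such instances. -/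
/-!
Each job keeps the single server busy for `s j + t j` time units, and these `2n` server
intervals are pairwise disjoint subintervals of `[0, C_max]`; comparing Lebesgue measures gives
`Σ_j (s_j + t_j) ≤ C_max` for every instance. When all times equal `c`, pairing the jobs
`2k, 2k+1` on the two machines keeps the server busy without a break, so the bound is attained.
-/

open Finset

open MeasureTheory

theorem sum_le_of_pairwiseDisjoint_Ico {ι : Type*} {s : Finset ι} {f ℓ : ι → ℝ} {a b : ℝ}
    (hab : a ≤ b) (hℓ : ∀ i ∈ s, 0 ≤ ℓ i)
    (hsub : ∀ i ∈ s, a ≤ f i ∧ f i + ℓ i ≤ b)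
    (hdisj : (s : Set ι).PairwiseDisjoint fun i => Set.Ico (f i) (f i + ℓ i)) :
    ∑ i ∈ s, ℓ i ≤ b - a := by
  have hle : volume (⋃ i ∈ s, Set.Ico (f i) (f i + ℓ i)) ≤ volume (Set.Icc a b) :=
    measure_mono <| Set.iUnion₂_subset fun i hi =>
      Set.Ico_subset_Icc_self.trans (Set.Icc_subset_Icc (hsub i hi).1 (hsub i hi).2)
  rw [measure_biUnion_finset hdisj fun _ _ => measurableSet_Ico, Real.volume_Icc] at hle
  simp_rw [Real.volume_Ico, add_sub_cancel_left] at hle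
  rwa [← ENNReal.ofReal_sum_of_nonneg hℓ,
    ENNReal.ofReal_le_ofReal_iff (sub_nonneg.2 hab)] at hle

theorem Set.disjoint_Ico_of_le_or_le {α : Type*} [LinearOrder α] {a₁ a₂ b₁ b₂ : α}
    (h : a₂ ≤ b₁ ∨ b₂ ≤ a₁) :
    Disjoint (Set.Ico a₁ a₂) (Set.Ico b₁ b₂) := by
  rw [Set.Ico_disjoint_Ico]
  rcases h with h | h
  · exact (min_le_left _ _).trans (h.trans (le_max_right _ _))
  · exact (min_le_right _ _).trans (h.trans (le_max_left _ _))

namespace PInstance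

variable {n : ℕ} (I : PInstance n)

theorem A_sub_p (j : Fin n) : I.A j - I.p j = I.s j + I.t j := by
  rw [A]; ring

/-- `Sum.inl j` is the loading and `Sum.inr j` the unloading interval of job `j`. -/
def serverStart (σ : Fin n → ℝ) : Fin n ⊕ Fin n → ℝ
  | .inl j => σ j
  | .inr j => σ j + I.s j + I.p j

def serverTime : Fin n ⊕ Fin n → ℝ
  | .inl j => I.s j
  | .inr j => I.t j

variable {I} {σ : Fin n → ℝ} {μ : Fin n → ℕ}

theorem Feasible.pairwiseDisjoint_server (hf : I.Feasible σ μ) :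
    ((univ : Finset (Fin n ⊕ Fin n)) : Set (Fin n ⊕ Fin n)).PairwiseDisjoint
      fun x => Set.Ico (I.serverStart σ x) (I.serverStart σ x + I.serverTime x) := by
  obtain ⟨-, -, -, hload, hunload, hmixed⟩ := hf
  rintro (i | i) - (j | j) - hij <;> apply Set.disjoint_Ico_of_le_or_le <;>
    simp only [serverStart, serverTime, A] at *
  · exact hload i j (by simpa using hij)
  · exact (hmixed i j).imp id fun h => by linarith
  · exact (hmixed j i).symm.imp (fun h => by linarith) fun h => by linarith
  · exact (hunload i j (by simpa using hij)).imp (fun h => by linarith) fun h => by linarith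

theorem Feasible.sum_s_add_t_le_of_isMakespan {C : ℝ} (hf : I.Feasible σ μ)
    (hC : I.IsMakespan σ C) :
    ∑ j, (I.s j + I.t j) ≤ C := by
  obtain ⟨hC, j₀, -⟩ := hC
  simp only [A] at hC
  have hσ : ∀ j, 0 ≤ σ j := hf.1
  have hbound := sum_le_of_pairwiseDisjoint_Ico (s := univ) (a := 0) (b := C)
    (by linarith [hσ j₀, hC j₀, I.s_pos j₀, I.p_pos j₀, I.t_pos j₀])
    (by rintro (j | j) - <;> simp only [serverTime] <;> linarith [I.s_pos j, I.t_pos j])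
    (by
      rintro (j | j) - <;> simp only [serverStart, serverTime] <;>
        constructor <;> linarith [hσ j, hC j, I.s_pos j, I.p_pos j, I.t_pos j])
    hf.pairwiseDisjoint_server
  simpa [serverTime, Fintype.sum_sum_type, sum_add_distrib] using hbound

end PInstance

/-- Job `2k` starts at time `4kc` on machine `1` and job `2k+1` at `(4k+1)c` on machine `2`;
the server then loads `2k`, loads `2k+1`, unloads `2k` and unloads `2k+1` during
`[4kc, (4k+4)c)`. -/
def pairedSlot (j : ℕ) : ℕ := 4 * (j / 2) + j % 2

def pairedStart (c : ℝ) {n : ℕ} (j : Fin n) : ℝ := c * pairedSlot j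

def pairedMachine {n : ℕ} (j : Fin n) : ℕ := j % 2 + 1

namespace PInstance

variable {n : ℕ} {I : PInstance n}

theorem feasible_pairedStart {c : ℝ} (hs : ∀ j, I.s j = c) (hp : ∀ j, I.p j = c)
    (ht : ∀ j, I.t j = c) : I.Feasible (pairedStart c) pairedMachine := by
  have hc : ∀ j : Fin n, 0 ≤ c := fun j => hs j ▸ (I.s_pos j).le
  refine ⟨fun j => mul_nonneg (hc j) (Nat.cast_nonneg _),
    fun j => by simp only [pairedMachine]; omega,
    fun i j hij hμ => ?_, fun i j hij => ?_, fun i j hij => ?_, fun i j => ?_⟩ <;>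
    simp only [pairedStart, A, hs, hp, ht, pairedMachine, ← Fin.val_ne_iff] at * <;>
    [ obtain h | h : pairedSlot i + 3 ≤ pairedSlot j ∨ pairedSlot j + 3 ≤ pairedSlot i :=
        (by unfold pairedSlot; omega);
      obtain h | h : pairedSlot i + 1 ≤ pairedSlot j ∨ pairedSlot j + 1 ≤ pairedSlot i :=
        (by unfold pairedSlot; omega);
      obtain h | h : pairedSlot i + 1 ≤ pairedSlot j ∨ pairedSlot j + 1 ≤ pairedSlot i :=
        (by unfold pairedSlot; omega);
      obtain h | h : pairedSlot i ≤ pairedSlot j + 1 ∨ pairedSlot j + 3 ≤ pairedSlot i :=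
        (by unfold pairedSlot; omega) ] <;>
    have := mul_le_mul_of_nonneg_left (Nat.cast_le.2 h) (hc i) <;>
    push_cast at this <;>
    first | (left; linarith) | (right; linarith)

theorem isMakespan_pairedStart {m : ℕ} (hm : 1 ≤ m) {I : PInstance (2 * m)} {c : ℝ}
    (hs : ∀ j, I.s j = c) (hp : ∀ j, I.p j = c) (ht : ∀ j, I.t j = c) :
    I.IsMakespan (pairedStart c) (4 * m * c) := by
  have hA : ∀ j, I.A j = 3 * c := fun j => by rw [A, hs, hp, ht]; ring
  have hc : 0 ≤ c := hs ⟨0, by omega⟩ ▸ (I.s_pos _).le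
  refine ⟨fun j => ?_, ⟨2 * m - 1, by omega⟩, ?_⟩ <;> simp only [pairedStart, hA]
  · have : pairedSlot j + 3 ≤ 4 * m := by have := j.isLt; unfold pairedSlot; omega
    have := mul_le_mul_of_nonneg_left (Nat.cast_le.2 this) hc
    push_cast at this
    linarith
  · have : pairedSlot (2 * m - 1) + 3 = 4 * m := by unfold pairedSlot; omega
    have : (pairedSlot (2 * m - 1) : ℝ) + 3 = 4 * m := by exact_mod_cast this
    linear_combination c * this

end PInstance

/-- If `n = 2m` (`m ≥ 1`) and `s i = p j`, `p i = t j` for all pairs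
(equivalently there is a common `c > 0` with `s j = p j = t j = c`), then the minimum
makespan over all feasible schedules equals `Σ_j (s j + t j) = 2nc`; in particular the
lower bound `Σ_j (A j − p j)` is tight for such instances. -/
theorem equal_times_min_makespan {m : ℕ} (hm : 1 ≤ m) (I : PInstance (2 * m))
    (hsp : ∀ i j, I.s i = I.p j) (hpt : ∀ i j, I.p i = I.t j)
    (c : ℝ) (hc : ∀ j, I.s j = c) :
    (∀ (σ : Fin (2 * m) → ℝ) (μ : Fin (2 * m) → ℕ) (C : ℝ),
        I.Feasible σ μ → I.IsMakespan σ C → (∑ j, (I.s j + I.t j)) ≤ C) ∧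
      (∃ (σ : Fin (2 * m) → ℝ) (μ : Fin (2 * m) → ℕ),
        I.Feasible σ μ ∧ I.IsMakespan σ (∑ j, (I.s j + I.t j))) ∧
      (∑ j, (I.s j + I.t j)) = 2 * ((2 * m : ℕ) : ℝ) * c ∧
      (∑ j, (I.s j + I.t j)) = ∑ j, (I.A j - I.p j) := by
  have hp : ∀ j, I.p j = c := fun j => (hsp j j).symm.trans (hc j)
  have ht : ∀ j, I.t j = c := fun j => (hpt j j).symm.trans (hp j)
  have hsum : ∑ j, (I.s j + I.t j) = 2 * ((2 * m : ℕ) : ℝ) * c := by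
    simp only [hc, ht, sum_const, card_univ, Fintype.card_fin, nsmul_eq_mul]
    ring
  refine ⟨fun σ μ C hf hC => hf.sum_s_add_t_le_of_isMakespan hC,
    ⟨pairedStart c, pairedMachine, PInstance.feasible_pairedStart hc hp ht, ?_⟩, hsum,
    (sum_congr rfl fun j _ => I.A_sub_p j).symm⟩
  convert PInstance.isMakespan_pairedStart hm hc hp ht using 1
  rw [hsum]
  push_cast
  ring
end
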